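/- arXiv:1703.05723 — 3 statements merged into one kernel-verified Lean document; each statement's English description precedes it below -/
import Mathlib

section
/- Let n ≥ 4 be an even integer. There exists a constant C > 0 (depending only on n) such that for all r, s > 0 and all y ∈ ℝⁿ with |y| = s, the spherical average K_n(r,s) := ⨍_{∂B_r(0)} ( | |x|² − |y|² | / |x−y|² ) dσ(x) satisfies K_n(r,s) ≤ C. -/
open MeasureTheory Metric Real Filter
open scoped Topology ENNReal RealInnerProductSpace

noncomputable section

/-- The Euclidean Laplacian of `f : ℝⁿ → ℝ` at `x`. -/
def eLap (n : ℕ) (f : EuclideanSpace ℝ (Fin n) → ℝ) (x : EuclideanSpace ℝ (Fin n)) : ℝ :=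
  ∑ i : Fin n, iteratedFDeriv ℝ 2 f x ![EuclideanSpace.single i 1, EuclideanSpace.single i 1]

/-- The iterate `(−Δ)^k` of the negative Euclidean Laplacian. -/
def negLapIter (n k : ℕ) (f : EuclideanSpace ℝ (Fin n) → ℝ) : EuclideanSpace ℝ (Fin n) → ℝ :=
  (fun g x => -(eLap n g x))^[k] f

/-- The constant `γ_n = 2^{n-2}·((n-2)/2)!·π^{n/2}`. -/
def gammaN (n : ℕ) : ℝ := 2 ^ (n - 2) * (Nat.factorial ((n - 2) / 2)) * π ^ (n / 2)

/-- The constant `σ_n = 2π^{n/2}/((n-2)/2)!`, the surface area of the unit sphere `𝕊^{n-1}`. -/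
def sigmaN (n : ℕ) : ℝ := 2 * π ^ (n / 2) / (Nat.factorial ((n - 2) / 2))

/-- The average of `f` over the Euclidean sphere of radius `r` centred at `x₀`
(with respect to the `(n-1)`-dimensional surface measure). -/
def sphereAvg (n : ℕ) (f : EuclideanSpace ℝ (Fin n) → ℝ) (x₀ : EuclideanSpace ℝ (Fin n))
    (r : ℝ) : ℝ :=
  ⨍ u : Metric.sphere (0 : EuclideanSpace ℝ (Fin n)) 1,
    f (x₀ + r • (u : EuclideanSpace ℝ (Fin n)))
      ∂((volume : Measure (EuclideanSpace ℝ (Fin n))).toSphere)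

/-- The surface integral of `f` over the sphere of radius `r` centred at `x₀`, with
respect to the `(n-1)`-dimensional surface measure (total mass `σ_n r^{n-1}`). -/
def sphereInt (n : ℕ) (f : EuclideanSpace ℝ (Fin n) → ℝ) (x₀ : EuclideanSpace ℝ (Fin n))
    (r : ℝ) : ℝ :=
  sigmaN n * r ^ (n - 1) * sphereAvg n f x₀ r

/-- `w` is a radial function. -/
def IsRadial (n : ℕ) (w : EuclideanSpace ℝ (Fin n) → ℝ) : Prop :=
  ∀ x y : EuclideanSpace ℝ (Fin n), ‖x‖ = ‖y‖ → w x = w y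

/-- The quantity `Δw + (n/2 − 1)|∇w|²` at `x`; the metric `g = e^{2w}|dx|²` has
non-negative scalar curvature at `x` iff this quantity is `≤ 0`, since
`R_g e^{2w} = −2(n−1)(Δw + (n/2−1)|∇w|²)`. -/
def scalExpr (n : ℕ) (w : EuclideanSpace ℝ (Fin n) → ℝ) (x : EuclideanSpace ℝ (Fin n)) : ℝ :=
  eLap n w x + ((n : ℝ) / 2 - 1) * ‖gradient w x‖ ^ 2

/-- The metric `e^{2w}|dx|²` on `ℝⁿ∖{0}` is complete at infinity: every smooth curve
`γ : [0,1) → ℝⁿ∖{0}` with `|γ(t)| → ∞` as `t → 1` has infinite `g`-length. -/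
def CompleteAtInfinity (n : ℕ) (w : EuclideanSpace ℝ (Fin n) → ℝ) : Prop :=
  ∀ γ : ℝ → EuclideanSpace ℝ (Fin n), ContDiffOn ℝ (⊤ : ℕ∞) γ (Set.Ico 0 1) →
    (∀ t ∈ Set.Ico (0 : ℝ) 1, γ t ≠ 0) →
    Tendsto (fun t => ‖γ t‖) (𝓝[<] (1 : ℝ)) atTop →
    ∫⁻ t in Set.Ico (0 : ℝ) 1, ENNReal.ofReal (Real.exp (w (γ t)) * ‖deriv γ t‖) = ⊤

/-- The normalised isoperimetric ratio
`C_{n-1,n}(r) = vol_g(∂B_r(0))^{n/(n−1)} / (n·σ_n^{1/(n−1)}·vol_g(B_r(0)))`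
of the metric `g = e^{2w}|dx|²`. -/
def isoRatio (n : ℕ) (w : EuclideanSpace ℝ (Fin n) → ℝ) (r : ℝ) : ℝ :=
  sphereInt n (fun x => Real.exp (((n : ℝ) - 1) * w x)) 0 r ^ ((n : ℝ) / ((n : ℝ) - 1)) /
    ((n : ℝ) * sigmaN n ^ ((1 : ℝ) / ((n : ℝ) - 1)) *
      ∫ x in Metric.ball (0 : EuclideanSpace ℝ (Fin n)) r, Real.exp ((n : ℝ) * w x))


open Set in
open scoped Pointwise in
private lemma sa_norm_ident {n : ℕ} (r s : ℝ) (u v : EuclideanSpace ℝ (Fin n)) (hu : ‖u‖ = 1)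
    (hv : ‖v‖ = 1) :
    ‖r • u - s • v‖ ^ 2 = (r - s) ^ 2 + r * s * ‖u - v‖ ^ 2 := by
  have h1 : ‖r • u - s • v‖ ^ 2 = r ^ 2 - 2 * (r * s * ⟪u, v⟫) + s ^ 2 := by
    rw [norm_sub_sq_real, real_inner_smul_left, real_inner_smul_right,
      norm_smul, norm_smul, hu, hv]
    rw [Real.norm_eq_abs, Real.norm_eq_abs, mul_one, mul_one]
    rw [sq_abs, sq_abs]
    ring
  have h2 : ‖u - v‖ ^ 2 = 2 - 2 * ⟪u, v⟫ := by
    rw [norm_sub_sq_real, hu, hv]; push_cast; ring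
  rw [h1, h2]; ring

lemma sa_pointwise {r s ρ : ℝ} (hr : 0 < r) (hs : 0 < s) (hρ : 0 < ρ) :
    |r ^ 2 - s ^ 2| / ((r - s) ^ 2 + r * s * ρ ^ 2) ≤ 3 + 2 * (1 / ρ ^ 2) := by
  have hD : 0 < (r - s) ^ 2 + r * s * ρ ^ 2 :=
    add_pos_of_nonneg_of_pos (sq_nonneg _) (mul_pos (mul_pos hr hs) (pow_pos hρ 2))
  rw [div_le_iff₀ hD]
  have h2 : 2 * (1 / ρ ^ 2) * (r * s * ρ ^ 2) = 2 * (r * s) := by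
    field_simp
  have hkey : |r ^ 2 - s ^ 2| ≤ 3 * (r - s) ^ 2 + 2 * (r * s) := by
    rcases abs_cases (r ^ 2 - s ^ 2) with ⟨h, _⟩ | ⟨h, _⟩ <;> rw [h] <;> nlinarith [sq_nonneg (r - s), sq_nonneg (r + s), mul_pos hr hs]
  have hrest : 0 ≤ 3 * (r * s * ρ ^ 2) + 2 * (1 / ρ ^ 2) * (r - s) ^ 2 := by positivity
  nlinarith [hkey, hrest]

open Set in
open scoped Pointwise in
private lemma sa_cap_bound {n : ℕ} (hn : 4 ≤ n) {v : EuclideanSpace ℝ (Fin n)} (hv : ‖v‖ = 1)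
    {τ : ℝ} (hτ : 0 < τ) (hτ2 : τ ≤ 2) :
    (volume : Measure (EuclideanSpace ℝ (Fin n))).toSphere
        {u : Metric.sphere (0 : EuclideanSpace ℝ (Fin n)) 1 |
          ‖(u : EuclideanSpace ℝ (Fin n)) - v‖ ≤ τ}
      ≤ ENNReal.ofReal (τ ^ (n - 1) * (3 * n * 2 ^ n)) *
          volume (Metric.ball (0 : EuclideanSpace ℝ (Fin n)) 1) := by
  set cap : Set (Metric.sphere (0 : EuclideanSpace ℝ (Fin n)) 1) :=
    {u : Metric.sphere (0 : EuclideanSpace ℝ (Fin n)) 1 | ‖(u : EuclideanSpace ℝ (Fin n)) - v‖ ≤ τ} with hcap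
  have hms : MeasurableSet cap := by
    have : IsClosed {u : Metric.sphere (0 : EuclideanSpace ℝ (Fin n)) 1 | ‖(u : EuclideanSpace ℝ (Fin n)) - v‖ ≤ τ} :=
      isClosed_le (by fun_prop) continuous_const
    exact this.measurableSet
  rw [Measure.toSphere_apply' _ hms]
  set N : ℕ := ⌊1 / τ⌋₊ + 1 with hN
  have hsub : Ioo (0 : ℝ) 1 • (Subtype.val '' cap) ⊆
      ⋃ j ∈ Finset.range N, Metric.closedBall ((j * τ) • v) (2 * τ) := by
    rintro x hx
    rw [Set.mem_smul] at hx
    obtain ⟨t, ht, w, hw, rfl⟩ := hx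
    obtain ⟨u, hu, rfl⟩ := hw
    have ht0 : 0 < t := ht.1
    have ht1 : t < 1 := ht.2
    have hu1 : ‖(u : EuclideanSpace ℝ (Fin n))‖ = 1 := by
      have := u.2
      simpa [mem_sphere_iff_norm] using this
    have huv : ‖(u : EuclideanSpace ℝ (Fin n)) - v‖ ≤ τ := hu
    refine Set.mem_iUnion₂.2 ⟨⌊t / τ⌋₊, ?_, ?_⟩
    · rw [Finset.mem_range, hN]
      have : ⌊t / τ⌋₊ ≤ ⌊1 / τ⌋₊ := Nat.floor_le_floor (by gcongr)
      omega
    · rw [Metric.mem_closedBall, dist_eq_norm]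
      set j : ℕ := ⌊t / τ⌋₊
      have hj1 : (j : ℝ) * τ ≤ t := by
        rw [← le_div_iff₀ hτ]
        exact Nat.floor_le (by positivity)
      have hj2 : t < ((j : ℝ) + 1) * τ := by
        rw [← div_lt_iff₀ hτ]
        exact Nat.lt_floor_add_one _
      calc ‖t • (u : EuclideanSpace ℝ (Fin n)) - (↑j * τ) • v‖
          = ‖t • ((u : EuclideanSpace ℝ (Fin n)) - v) + (t - ↑j * τ) • v‖ := by
            congr 1
            rw [smul_sub, sub_smul]
            abel
        _ ≤ ‖t • ((u : EuclideanSpace ℝ (Fin n)) - v)‖ + ‖(t - ↑j * τ) • v‖ := norm_add_le _ _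
        _ = t * ‖(u : EuclideanSpace ℝ (Fin n)) - v‖ + |t - ↑j * τ| * 1 := by
            rw [norm_smul, norm_smul, Real.norm_eq_abs, Real.norm_eq_abs, hv,
              abs_of_pos ht0]
        _ ≤ 2 * τ := by
            have habs : |t - ↑j * τ| ≤ τ := by
              rw [abs_of_nonneg (by linarith)]
              linarith
            have h1 : t * ‖(u : EuclideanSpace ℝ (Fin n)) - v‖ ≤ 1 * τ :=
              mul_le_mul ht1.le huv (norm_nonneg _) zero_le_one
            nlinarith [abs_nonneg (t - ↑j * τ)]
  calc (Module.finrank ℝ (EuclideanSpace ℝ (Fin n)) : ℝ≥0∞) * volume (Ioo (0 : ℝ) 1 • (Subtype.val '' cap))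
      ≤ (n : ℝ≥0∞) * volume (⋃ j ∈ Finset.range N, Metric.closedBall ((j * τ) • v) (2 * τ)) := by
        rw [finrank_euclideanSpace_fin]
        exact mul_le_mul_right (measure_mono hsub) _
    _ ≤ (n : ℝ≥0∞) * ∑ j ∈ Finset.range N, volume (Metric.closedBall ((j * τ) • v) (2 * τ)) :=
        mul_le_mul_right (measure_biUnion_finset_le _ _) _
    _ = (n : ℝ≥0∞) * ∑ _j ∈ Finset.range N,
          (ENNReal.ofReal ((2 * τ) ^ n) * volume (Metric.ball (0 : EuclideanSpace ℝ (Fin n)) 1)) := by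
        congr 1
        refine Finset.sum_congr rfl fun j _ => ?_
        rw [Measure.addHaar_closedBall _ _ (by positivity), finrank_euclideanSpace_fin]
    _ = (n : ℝ≥0∞) * (N * (ENNReal.ofReal ((2 * τ) ^ n) * volume (Metric.ball (0 : EuclideanSpace ℝ (Fin n)) 1))) := by
        rw [Finset.sum_const, Finset.card_range, nsmul_eq_mul]
    _ = ENNReal.ofReal ((n : ℝ) * N * (2 * τ) ^ n) * volume (Metric.ball (0 : EuclideanSpace ℝ (Fin n)) 1) := by
        rw [ENNReal.ofReal_mul (by positivity), ENNReal.ofReal_mul (by positivity),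
          ENNReal.ofReal_natCast, ENNReal.ofReal_natCast]
        ring
    _ ≤ ENNReal.ofReal (τ ^ (n - 1) * (3 * n * 2 ^ n)) * volume (Metric.ball (0 : EuclideanSpace ℝ (Fin n)) 1) := by
        refine mul_le_mul_left (ENNReal.ofReal_le_ofReal ?_) _
        have hNle : (N : ℝ) ≤ 3 / τ := by
          rw [hN]
          push_cast
          have : (⌊1 / τ⌋₊ : ℝ) ≤ 1 / τ := Nat.floor_le (by positivity)
          have h1 : (1 : ℝ) / τ + 1 ≤ 3 / τ := by
            rw [div_add' _ _ _ hτ.ne', div_le_div_iff₀ hτ hτ]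
            nlinarith
          linarith
        have hτn : τ ^ n = τ ^ (n - 1) * τ := by
          conv_lhs => rw [show n = (n - 1) + 1 by omega]
          rw [pow_succ]
        calc (n : ℝ) * N * (2 * τ) ^ n ≤ (n : ℝ) * (3 / τ) * (2 * τ) ^ n := by
              gcongr
          _ = τ ^ (n - 1) * (3 * n * 2 ^ n) := by
              rw [mul_pow, hτn]
              field_simp

open Set in
open scoped Pointwise in
private lemma sa_null {n : ℕ} (hn : 4 ≤ n) (v : EuclideanSpace ℝ (Fin n)) :
    (volume : Measure (EuclideanSpace ℝ (Fin n))).toSphere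
      {u : Metric.sphere (0 : EuclideanSpace ℝ (Fin n)) 1 |
        (u : EuclideanSpace ℝ (Fin n)) = v} = 0 := by
  have hms : MeasurableSet {u : Metric.sphere (0 : EuclideanSpace ℝ (Fin n)) 1 |
      (u : EuclideanSpace ℝ (Fin n)) = v} := by
    have : IsClosed {u : Metric.sphere (0 : EuclideanSpace ℝ (Fin n)) 1 |
        (u : EuclideanSpace ℝ (Fin n)) = v} :=
      isClosed_eq (by fun_prop) continuous_const
    exact this.measurableSet
  rw [Measure.toSphere_apply' _ hms]
  have hsub : Ioo (0 : ℝ) 1 • (Subtype.val '' {u : Metric.sphere (0 : EuclideanSpace ℝ (Fin n)) 1 |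
      (u : EuclideanSpace ℝ (Fin n)) = v}) ⊆ (Submodule.span ℝ {v} : Submodule ℝ (EuclideanSpace ℝ (Fin n))) := by
    rintro x hx
    rw [Set.mem_smul] at hx
    obtain ⟨t, ht, w, hw, rfl⟩ := hx
    obtain ⟨u, hu, rfl⟩ := hw
    have : (u : EuclideanSpace ℝ (Fin n)) = v := hu
    rw [this]
    exact Submodule.smul_mem _ _ (Submodule.mem_span_singleton_self v)
  have hspan : (Submodule.span ℝ {v} : Submodule ℝ (EuclideanSpace ℝ (Fin n))) ≠ ⊤ := by
    intro h
    rcases eq_or_ne v 0 with hv0 | hv0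
    · rw [hv0] at h
      simp only [Submodule.span_zero_singleton] at h
      have : Module.finrank ℝ (EuclideanSpace ℝ (Fin n)) = 0 := by
        rw [← finrank_top, ← h]
        simp
      rw [finrank_euclideanSpace_fin] at this
      omega
    · have h1 : Module.finrank ℝ (Submodule.span ℝ ({v} : Set (EuclideanSpace ℝ (Fin n)))) = 1 :=
        finrank_span_singleton hv0
      rw [h, finrank_top, finrank_euclideanSpace_fin] at h1
      omega
  have h0 : volume (Ioo (0 : ℝ) 1 • (Subtype.val '' {u : Metric.sphere (0 : EuclideanSpace ℝ (Fin n)) 1 |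
      (u : EuclideanSpace ℝ (Fin n)) = v})) = 0 :=
    measure_mono_null hsub (Measure.addHaar_submodule _ _ hspan)
  rw [h0, mul_zero]

open Set in
open scoped Pointwise in
private lemma sa_riesz {n : ℕ} (hn : 4 ≤ n) {v : EuclideanSpace ℝ (Fin n)} (hv : ‖v‖ = 1) :
    ∫⁻ u : Metric.sphere (0 : EuclideanSpace ℝ (Fin n)) 1,
        ENNReal.ofReal (1 / ‖(u : EuclideanSpace ℝ (Fin n)) - v‖ ^ 2)
        ∂((volume : Measure (EuclideanSpace ℝ (Fin n))).toSphere)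
      ≤ ENNReal.ofReal (2 ^ (n - 1) * (3 * n * 2 ^ n) * 2) *
          volume (Metric.ball (0 : EuclideanSpace ℝ (Fin n)) 1) := by
  set σ := (volume : Measure (EuclideanSpace ℝ (Fin n))).toSphere
  set g : Metric.sphere (0 : EuclideanSpace ℝ (Fin n)) 1 → ℝ≥0∞ :=
    fun u => ENNReal.ofReal (1 / ‖(u : EuclideanSpace ℝ (Fin n)) - v‖ ^ 2) with hg
  set A : ℕ → Set (Metric.sphere (0 : EuclideanSpace ℝ (Fin n)) 1) :=
    fun k => {u | (1 / 2 : ℝ) ^ k < ‖(u : EuclideanSpace ℝ (Fin n)) - v‖ ∧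
      ‖(u : EuclideanSpace ℝ (Fin n)) - v‖ ≤ 2 * (1 / 2 : ℝ) ^ k} with hA
  set Z : Set (Metric.sphere (0 : EuclideanSpace ℝ (Fin n)) 1) :=
    {u | (u : EuclideanSpace ℝ (Fin n)) = v} with hZ
  have hcover : (univ : Set (Metric.sphere (0 : EuclideanSpace ℝ (Fin n)) 1)) ⊆ Z ∪ ⋃ k, A k := by
    intro u _
    set ρ := ‖(u : EuclideanSpace ℝ (Fin n)) - v‖ with hρdef
    rcases eq_or_lt_of_le (norm_nonneg ((u : EuclideanSpace ℝ (Fin n)) - v)) with h0 | h0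
    · left
      exact sub_eq_zero.1 (norm_eq_zero.1 h0.symm)
    · right
      have hρ2 : ρ ≤ 2 := by
        have hu1 : ‖(u : EuclideanSpace ℝ (Fin n))‖ = 1 := by
          have := u.2; simpa [mem_sphere_iff_norm] using this
        calc ρ ≤ ‖(u : EuclideanSpace ℝ (Fin n))‖ + ‖v‖ := norm_sub_le _ _
          _ = 2 := by rw [hu1, hv]; norm_num
      have hex : ∃ m : ℕ, (1 / 2 : ℝ) ^ m < ρ := exists_pow_lt_of_lt_one h0 (by norm_num)
      set k := Nat.find hex with hk
      have hk1 : (1 / 2 : ℝ) ^ k < ρ := Nat.find_spec hex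
      have hk2 : ρ ≤ 2 * (1 / 2 : ℝ) ^ k := by
        rcases Nat.eq_zero_or_pos k with h | h
        · rw [h]; simpa using hρ2
        · have := Nat.find_min hex (m := k - 1) (by omega)
          push_neg at this
          have heq : (1 / 2 : ℝ) ^ (k - 1) = 2 * (1 / 2 : ℝ) ^ k := by
            conv_rhs => rw [show k = (k - 1) + 1 by omega, pow_succ]
            ring
          rw [← heq]
          exact this
      exact Set.mem_iUnion.2 ⟨k, hk1, hk2⟩
  have hgm : Measurable g := by
    apply ENNReal.measurable_ofReal.comp
    apply Measurable.div measurable_const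
    fun_prop
  calc ∫⁻ u, g u ∂σ = ∫⁻ u in (univ : Set _), g u ∂σ := by rw [Measure.restrict_univ]
    _ ≤ ∫⁻ u in Z ∪ ⋃ k, A k, g u ∂σ :=
        lintegral_mono' (Measure.restrict_mono hcover le_rfl) le_rfl
    _ ≤ (∫⁻ u in Z, g u ∂σ) + ∫⁻ u in ⋃ k, A k, g u ∂σ := lintegral_union_le _ _ _
    _ = ∫⁻ u in ⋃ k, A k, g u ∂σ := by
        rw [setLIntegral_measure_zero _ _ (sa_null hn v), zero_add]
    _ ≤ ∑' k, ∫⁻ u in A k, g u ∂σ := lintegral_iUnion_le _ _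
    _ ≤ ∑' k, ENNReal.ofReal (2 ^ (n - 1) * (3 * n * 2 ^ n)) * (2⁻¹ : ℝ≥0∞) ^ k *
          volume (Metric.ball (0 : EuclideanSpace ℝ (Fin n)) 1) := by
        refine ENNReal.tsum_le_tsum fun k => ?_
        have hstep1 : ∫⁻ u in A k, g u ∂σ ≤ ∫⁻ _u in A k, ENNReal.ofReal ((4 : ℝ) ^ k) ∂σ := by
          refine setLIntegral_mono measurable_const fun u hu => ?_
          apply ENNReal.ofReal_le_ofReal
          have h1 : (1 / 2 : ℝ) ^ k < ‖(u : EuclideanSpace ℝ (Fin n)) - v‖ := hu.1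
          have h2 : (0 : ℝ) < (1 / 2 : ℝ) ^ k := by positivity
          have hnpos : (0 : ℝ) < ‖(u : EuclideanSpace ℝ (Fin n)) - v‖ := lt_trans h2 h1
          rw [div_le_iff₀ (pow_pos hnpos 2)]
          have hsq : ((1 / 2 : ℝ) ^ k) ^ 2 ≤ ‖(u : EuclideanSpace ℝ (Fin n)) - v‖ ^ 2 := by
            gcongr
          have hpow : ((1 / 2 : ℝ) ^ k) ^ 2 = (1 / 4 : ℝ) ^ k := by
            rw [← pow_mul, mul_comm, pow_mul]
            norm_num
          calc (1 : ℝ) = 4 ^ k * ((1 / 2 : ℝ) ^ k) ^ 2 := by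
                rw [hpow, ← mul_pow]
                norm_num
            _ ≤ 4 ^ k * ‖(u : EuclideanSpace ℝ (Fin n)) - v‖ ^ 2 := by gcongr
        have hstep2 : σ (A k) ≤ ENNReal.ofReal ((2 * (1 / 2 : ℝ) ^ k) ^ (n - 1) * (3 * n * 2 ^ n)) *
            volume (Metric.ball (0 : EuclideanSpace ℝ (Fin n)) 1) := by
          refine le_trans (measure_mono ?_) (sa_cap_bound hn hv (τ := 2 * (1 / 2 : ℝ) ^ k)
            (by positivity) ?_)
          · intro u hu
            exact hu.2
          · have : ((1 / 2 : ℝ) ^ k) ≤ 1 := pow_le_one₀ (by norm_num) (by norm_num)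
            linarith
        calc ∫⁻ u in A k, g u ∂σ ≤ ENNReal.ofReal ((4 : ℝ) ^ k) * σ (A k) := by
              rw [setLIntegral_const] at hstep1
              exact hstep1
          _ ≤ ENNReal.ofReal ((4 : ℝ) ^ k) *
              (ENNReal.ofReal ((2 * (1 / 2 : ℝ) ^ k) ^ (n - 1) * (3 * n * 2 ^ n)) *
                volume (Metric.ball (0 : EuclideanSpace ℝ (Fin n)) 1)) :=
              mul_le_mul_right hstep2 _
          _ = ENNReal.ofReal ((4 : ℝ) ^ k * ((2 * (1 / 2 : ℝ) ^ k) ^ (n - 1) * (3 * n * 2 ^ n))) *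
              volume (Metric.ball (0 : EuclideanSpace ℝ (Fin n)) 1) := by
              rw [← mul_assoc, ← ENNReal.ofReal_mul (by positivity)]
          _ ≤ ENNReal.ofReal (2 ^ (n - 1) * (3 * n * 2 ^ n) * (1 / 2 : ℝ) ^ k) *
              volume (Metric.ball (0 : EuclideanSpace ℝ (Fin n)) 1) := by
              refine mul_le_mul_left (ENNReal.ofReal_le_ofReal ?_) _
              have hmain : (4 : ℝ) ^ k * (2 * (1 / 2 : ℝ) ^ k) ^ (n - 1) ≤
                  2 ^ (n - 1) * (1 / 2 : ℝ) ^ k := by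
                rw [mul_pow]
                have h1 : (4 : ℝ) ^ k * ((1 / 2 : ℝ) ^ k) ^ (n - 1) ≤ (1 / 2 : ℝ) ^ k := by
                  have hsplit : ((1 / 2 : ℝ) ^ k) ^ (n - 1) =
                      (1 / 4 : ℝ) ^ k * (1 / 2 : ℝ) ^ (k * (n - 3)) := by
                    rw [← pow_mul]
                    have hsplit2 : n - 1 = 2 + (n - 3) := by omega
                    rw [hsplit2, Nat.mul_add, pow_add, pow_mul]
                    congr 1
                    rw [← pow_mul, mul_comm, pow_mul]
                    norm_num
                  rw [hsplit, ← mul_assoc]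
                  have h4 : (4 : ℝ) ^ k * (1 / 4 : ℝ) ^ k = 1 := by
                    rw [← mul_pow]; norm_num
                  rw [h4, one_mul]
                  exact pow_le_pow_of_le_one (by norm_num) (by norm_num) (by
                    have : 1 ≤ n - 3 := by omega
                    calc k = k * 1 := (mul_one k).symm
                      _ ≤ k * (n - 3) := by exact Nat.mul_le_mul_left k this)
                calc (4 : ℝ) ^ k * (2 ^ (n - 1) * ((1 / 2 : ℝ) ^ k) ^ (n - 1)) =
                      2 ^ (n - 1) * ((4 : ℝ) ^ k * ((1 / 2 : ℝ) ^ k) ^ (n - 1)) := by ring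
                  _ ≤ 2 ^ (n - 1) * (1 / 2 : ℝ) ^ k := by
                      refine mul_le_mul_of_nonneg_left h1 (by positivity)
              have hc : (0 : ℝ) ≤ 3 * n * 2 ^ n := by positivity
              calc (4 : ℝ) ^ k * ((2 * (1 / 2 : ℝ) ^ k) ^ (n - 1) * (3 * n * 2 ^ n)) =
                    ((4 : ℝ) ^ k * (2 * (1 / 2 : ℝ) ^ k) ^ (n - 1)) * (3 * n * 2 ^ n) := by ring
                _ ≤ (2 ^ (n - 1) * (1 / 2 : ℝ) ^ k) * (3 * n * 2 ^ n) :=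
                    mul_le_mul_of_nonneg_right hmain hc
                _ = 2 ^ (n - 1) * (3 * n * 2 ^ n) * (1 / 2 : ℝ) ^ k := by ring
          _ = ENNReal.ofReal (2 ^ (n - 1) * (3 * n * 2 ^ n)) * (2⁻¹ : ℝ≥0∞) ^ k *
              volume (Metric.ball (0 : EuclideanSpace ℝ (Fin n)) 1) := by
              rw [ENNReal.ofReal_mul (by positivity),
                ENNReal.ofReal_pow (by norm_num : (0 : ℝ) ≤ 1 / 2)]
              congr 2
              rw [one_div, ENNReal.ofReal_inv_of_pos (by norm_num), ENNReal.ofReal_ofNat]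
    _ = ENNReal.ofReal (2 ^ (n - 1) * (3 * n * 2 ^ n)) * (∑' k, (2⁻¹ : ℝ≥0∞) ^ k) *
          volume (Metric.ball (0 : EuclideanSpace ℝ (Fin n)) 1) := by
        rw [ENNReal.tsum_mul_right, ENNReal.tsum_mul_left]
    _ ≤ ENNReal.ofReal (2 ^ (n - 1) * (3 * n * 2 ^ n) * 2) *
          volume (Metric.ball (0 : EuclideanSpace ℝ (Fin n)) 1) := by
        rw [ENNReal.tsum_geometric]
        have h2 : ((1 : ℝ≥0∞) - 2⁻¹)⁻¹ = 2 := by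
          rw [ENNReal.one_sub_inv_two]
          simp
        rw [h2]
        have h3 : ENNReal.ofReal (2 ^ (n - 1) * (3 * n * 2 ^ n) * 2) =
            ENNReal.ofReal (2 ^ (n - 1) * (3 * n * 2 ^ n)) * 2 := by
          rw [ENNReal.ofReal_mul (by positivity), ENNReal.ofReal_ofNat]
        rw [h3]

/-- **Proposition 2.1 iii).** There is a constant `C > 0` such that for all `r, s > 0`
and `|y| = s`, the spherical average
`K_n(r,s) = ⨍_{∂B_r(0)} ||x|² − |y|²|/|x−y|² dσ(x)` satisfies `K_n(r,s) ≤ C`. -/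
theorem sphereAvg_abs_sq_sub_div_est (n : ℕ) (hn : 4 ≤ n) (hne : Even n) :
    ∃ C : ℝ, 0 < C ∧ ∀ (r s : ℝ) (y : EuclideanSpace ℝ (Fin n)),
      0 < r → 0 < s → ‖y‖ = s →
      sphereAvg n (fun x => |‖x‖ ^ 2 - ‖y‖ ^ 2| / ‖x - y‖ ^ 2) 0 r ≤ C := by
  set σ := (volume : Measure (EuclideanSpace ℝ (Fin n))).toSphere with hσ
  set B : ℝ≥0∞ := ENNReal.ofReal 3 * σ Set.univ +
    2 * (ENNReal.ofReal (2 ^ (n - 1) * (3 * n * 2 ^ n) * 2) *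
      volume (Metric.ball (0 : EuclideanSpace ℝ (Fin n)) 1)) with hB
  have hBne : B ≠ ⊤ := by
    refine ENNReal.add_ne_top.2 ⟨?_, ?_⟩
    · exact ENNReal.mul_ne_top ENNReal.ofReal_ne_top (measure_ne_top _ _)
    · exact ENNReal.mul_ne_top (by norm_num)
        (ENNReal.mul_ne_top ENNReal.ofReal_ne_top measure_ball_lt_top.ne)
  refine ⟨(σ Set.univ).toReal⁻¹ * B.toReal + 1, by positivity, ?_⟩
  intro r s y hr hs hy
  have hs0 : s ≠ 0 := hs.ne'
  set v : EuclideanSpace ℝ (Fin n) := s⁻¹ • y with hvdef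
  have hv : ‖v‖ = 1 := by
    rw [hvdef, norm_smul, Real.norm_eq_abs, abs_of_pos (inv_pos.2 hs), hy]
    field_simp
  have hyv : y = s • v := by
    rw [hvdef, smul_smul]
    field_simp
    rw [one_smul]
  set g : Metric.sphere (0 : EuclideanSpace ℝ (Fin n)) 1 → ℝ≥0∞ :=
    fun u => ENNReal.ofReal (1 / ‖(u : EuclideanSpace ℝ (Fin n)) - v‖ ^ 2) with hg
  have hgm : Measurable g := by
    apply ENNReal.measurable_ofReal.comp
    apply Measurable.div measurable_const
    fun_prop
  set f : Metric.sphere (0 : EuclideanSpace ℝ (Fin n)) 1 → ℝ := fun u =>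
    |‖(0 : EuclideanSpace ℝ (Fin n)) + r • (u : EuclideanSpace ℝ (Fin n))‖ ^ 2 - ‖y‖ ^ 2| /
      ‖(0 : EuclideanSpace ℝ (Fin n)) + r • (u : EuclideanSpace ℝ (Fin n)) - y‖ ^ 2 with hf
  have hfm : AEStronglyMeasurable f σ := by
    apply Measurable.aestronglyMeasurable
    apply Measurable.div <;> fun_prop
  have hf0 : 0 ≤ᵐ[σ] f := Filter.Eventually.of_forall fun u => by positivity
  -- the a.e. bound
  have hae : ∀ᵐ (u : Metric.sphere (0 : EuclideanSpace ℝ (Fin n)) 1) ∂σ,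
      (u : EuclideanSpace ℝ (Fin n)) ≠ v := by
    rw [ae_iff]
    convert sa_null hn v using 2
    simp
  have hbound : ∀ᵐ u ∂σ, ENNReal.ofReal (f u) ≤ ENNReal.ofReal 3 + 2 * g u := by
    filter_upwards [hae] with u huv
    have hu1 : ‖(u : EuclideanSpace ℝ (Fin n))‖ = 1 := by
      have := u.2
      simpa [mem_sphere_iff_norm] using this
    set ρ := ‖(u : EuclideanSpace ℝ (Fin n)) - v‖ with hρ
    have hρ0 : 0 < ρ := by
      rw [hρ, norm_pos_iff, sub_ne_zero]
      exact huv
    have hfu : f u = |r ^ 2 - s ^ 2| / ((r - s) ^ 2 + r * s * ρ ^ 2) := by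
      rw [hf]
      simp only [zero_add]
      rw [hyv, sa_norm_ident r s _ v hu1 hv, norm_smul, Real.norm_eq_abs, abs_of_pos hr, hu1,
        mul_one]
      rw [norm_smul, Real.norm_eq_abs, abs_of_pos hs, hv, mul_one, ← hρ]
    rw [hfu]
    calc ENNReal.ofReal (|r ^ 2 - s ^ 2| / ((r - s) ^ 2 + r * s * ρ ^ 2))
        ≤ ENNReal.ofReal (3 + 2 * (1 / ρ ^ 2)) :=
          ENNReal.ofReal_le_ofReal (sa_pointwise hr hs hρ0)
      _ = ENNReal.ofReal 3 + 2 * g u := by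
          rw [ENNReal.ofReal_add (by norm_num) (by positivity),
            ENNReal.ofReal_mul (by norm_num)]
          have h22 : ENNReal.ofReal 2 = 2 := by norm_num
          rw [h22, hρ]
  have hlint : ∫⁻ u, ENNReal.ofReal (f u) ∂σ ≤ B := by
    calc ∫⁻ u, ENNReal.ofReal (f u) ∂σ ≤ ∫⁻ u, (ENNReal.ofReal 3 + 2 * g u) ∂σ :=
          lintegral_mono_ae hbound
      _ = ENNReal.ofReal 3 * σ Set.univ + 2 * ∫⁻ u, g u ∂σ := by
          rw [lintegral_add_left measurable_const, lintegral_const, lintegral_const_mul _ hgm]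
      _ ≤ B := by
          rw [hB]
          exact add_le_add le_rfl (mul_le_mul_right (sa_riesz hn hv) 2)
  rw [sphereAvg, average_eq]
  have hint : ∫ u, (fun x => |‖x‖ ^ 2 - ‖y‖ ^ 2| / ‖x - y‖ ^ 2)
      ((0 : EuclideanSpace ℝ (Fin n)) + r • (u : EuclideanSpace ℝ (Fin n))) ∂σ
      = (∫⁻ u, ENNReal.ofReal (f u) ∂σ).toReal :=
    integral_eq_lintegral_of_nonneg_ae hf0 hfm
  rw [hint, smul_eq_mul]
  rw [show ((volume : Measure (EuclideanSpace ℝ (Fin n))).toSphere.real Set.univ) = (σ Set.univ).toReal from rfl]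
  have h1 : (∫⁻ u, ENNReal.ofReal (f u) ∂σ).toReal ≤ B.toReal := ENNReal.toReal_mono hBne hlint
  have h2 : (0 : ℝ) ≤ (σ Set.univ).toReal⁻¹ := by positivity
  nlinarith [mul_le_mul_of_nonneg_left h1 h2]
end
end

section
/- Let n ≥ 4 be an even integer. There exists a constant C > 0 (depending only on n) such that for all r, s > 0 with (1/2)r ≤ s ≤ (3/2)r and all y ∈ ℝⁿ with |y| = s, the spherical average L_n(r,s) := ⨍_{∂B_r(0)} log(|y|/|x−y|) dσ(x) satisfies |L_n(r,s)| ≤ C. -/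
open MeasureTheory Metric Real Filter
open scoped Topology ENNReal RealInnerProductSpace Pointwise

noncomputable section

namespace SphereAvgAux

variable {n : ℕ}

local notation "E'" => EuclideanSpace ℝ (Fin n)

lemma cap_measurable (y' : E') (t : ℝ) :
    MeasurableSet {u : Metric.sphere (0 : E') 1 | ‖(u : E') - y'‖ < t} :=
  measurableSet_lt (continuous_subtype_val.sub continuous_const).norm.measurable
    measurable_const

lemma cap_bound (hn : 2 ≤ n) (y' : E') {t : ℝ} (ht : 0 < t) (ht1 : t < 1) :
    (volume : Measure E').toSphere {u : Metric.sphere (0 : E') 1 | ‖(u : E') - y'‖ < t}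
      ≤ ENNReal.ofReal
        ((n * 2 ^ n * (volume (Metric.ball (0 : E') 1)).toReal) * t) := by
  set S := {u : Metric.sphere (0 : E') 1 | ‖(u : E') - y'‖ < t} with hSdef
  set C := Set.Ioo (0:ℝ) 1 • (((↑) : Metric.sphere (0:E') 1 → E') '' S) with hCdef
  haveI : Nontrivial E' := Module.nontrivial_of_finrank_pos
    (R := ℝ) (by rw [finrank_euclideanSpace_fin]; omega)
  have hCb : C ⊆ Metric.ball (0 : E') 1 := by
    rintro x ⟨ρ, hρ, a, ha, rfl⟩
    obtain ⟨u, hu, rfl⟩ := ha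
    have hun : ‖(u : E')‖ = 1 := mem_sphere_zero_iff_norm.1 u.2
    rw [mem_ball_zero_iff, norm_smul, Real.norm_eq_abs, hun,
      abs_of_pos hρ.1, mul_one]
    exact hρ.2
  have hCfin : volume C ≠ ⊤ :=
    ((measure_mono hCb).trans_lt measure_ball_lt_top).ne
  have h1t : (0:ℝ) < 1 - t := by linarith
  have hsub : C ⊆ ((1 - t) • C) ∪ Metric.ball y' (2 * t) := by
    rintro x ⟨ρ, hρ, a, ha, rfl⟩
    obtain ⟨hρ0, hρ1⟩ := hρ
    by_cases hcase : ρ < 1 - t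
    · left
      refine ⟨(ρ / (1 - t)) • a, ⟨ρ / (1 - t),
        ⟨div_pos hρ0 h1t, (div_lt_one h1t).2 hcase⟩, a, ha, rfl⟩, ?_⟩
      show (1 - t) • ((ρ / (1 - t)) • a) = ρ • a
      rw [smul_smul]
      congr 1
      field_simp
    · right
      obtain ⟨u, hu, rfl⟩ := ha
      have hun : ‖(u : E')‖ = 1 := mem_sphere_zero_iff_norm.1 u.2
      have hd : ‖(u : E') - y'‖ < t := hu
      have h1 : ‖ρ • (u:E') - (u:E')‖ = 1 - ρ := by
        have : ρ • (u:E') - (u:E') = (ρ - 1) • (u:E') := by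
          rw [sub_smul, one_smul]
        rw [this, norm_smul, Real.norm_eq_abs, hun, mul_one,
          abs_of_nonpos (by linarith)]
        ring
      rw [Metric.mem_ball, dist_eq_norm]
      calc ‖ρ • (u:E') - y'‖
          ≤ ‖ρ • (u:E') - (u:E')‖ + ‖(u:E') - y'‖ := by
            simpa using norm_sub_le_norm_sub_add_norm_sub (ρ • (u:E')) (u:E') y'
        _ < (1 - ρ) + t := by rw [h1]; linarith
        _ ≤ 2 * t := by
            have : 1 - t ≤ ρ := not_lt.1 hcase
            linarith
  have key : volume C ≤ ENNReal.ofReal ((1-t)^n) * volume C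
      + ENNReal.ofReal ((2*t)^n) * volume (Metric.ball (0:E') 1) := by
    calc volume C ≤ volume (((1 - t) • C) ∪ Metric.ball y' (2*t)) := measure_mono hsub
      _ ≤ volume ((1 - t) • C) + volume (Metric.ball y' (2*t)) := measure_union_le _ _
      _ = ENNReal.ofReal ((1-t)^n) * volume C
          + ENNReal.ofReal ((2*t)^n) * volume (Metric.ball (0:E') 1) := by
          rw [Measure.addHaar_smul volume, Measure.addHaar_ball volume y'
              (show (0:ℝ) ≤ 2 * t by positivity),
            finrank_euclideanSpace_fin, abs_of_nonneg (by positivity)]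
  set a := (volume C).toReal with hadef
  set V := (volume (Metric.ball (0:E') 1)).toReal with hVdef
  have hV : 0 ≤ V := ENNReal.toReal_nonneg
  have ha0 : 0 ≤ a := ENNReal.toReal_nonneg
  have hreal : a ≤ (1-t)^n * a + (2*t)^n * V := by
    have hfin2 : ENNReal.ofReal ((1-t)^n) * volume C
        + ENNReal.ofReal ((2*t)^n) * volume (Metric.ball (0:E') 1) ≠ ⊤ :=
      ENNReal.add_ne_top.2 ⟨ENNReal.mul_ne_top ENNReal.ofReal_ne_top hCfin,
        ENNReal.mul_ne_top ENNReal.ofReal_ne_top measure_ball_lt_top.ne⟩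
    have h1 := ENNReal.toReal_mono hfin2 key
    rwa [ENNReal.toReal_add (ENNReal.mul_ne_top ENNReal.ofReal_ne_top hCfin)
        (ENNReal.mul_ne_top ENNReal.ofReal_ne_top measure_ball_lt_top.ne),
      ENNReal.toReal_mul, ENNReal.toReal_mul, ENNReal.toReal_ofReal (by positivity),
      ENNReal.toReal_ofReal (by positivity)] at h1
  have hσ : (volume : Measure E').toSphere S = (Module.finrank ℝ E' : ℝ≥0∞) * volume C := by
    rw [Measure.toSphere_apply' _ (cap_measurable y' t)]
  have hfin' : (volume : Measure E').toSphere S ≠ ⊤ := measure_ne_top _ _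
  rw [← ENNReal.ofReal_toReal hfin']
  apply ENNReal.ofReal_le_ofReal
  rw [hσ, ENNReal.toReal_mul, ← hadef]
  simp only [ENNReal.toReal_natCast, finrank_euclideanSpace_fin]
  -- real arithmetic: from hreal deduce a ≤ 2^n * V * t and conclude
  have hpow1 : (1-t)^n ≤ 1 - t := pow_le_of_le_one (by linarith) (by linarith) (by omega)
  have hpow2 : t^n ≤ t^2 := pow_le_pow_of_le_one ht.le ht1.le hn
  have h2n : (2:ℝ)^n * t^n = (2*t)^n := (mul_pow 2 t n).symm
  have hta : t * a ≤ 2^n * t^2 * V := by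
    have h1 : (1-t)^n * a ≤ (1-t) * a := mul_le_mul_of_nonneg_right hpow1 ha0
    have h2 : (2*t)^n * V ≤ 2^n * t^2 * V := by
      rw [← h2n]
      have := mul_le_mul_of_nonneg_left hpow2 (by positivity : (0:ℝ) ≤ (2:ℝ)^n)
      nlinarith
    nlinarith
  have hfin : a ≤ 2^n * V * t := by
    have h3 : t * a ≤ t * (2^n * V * t) := by nlinarith
    exact le_of_mul_le_mul_left h3 ht
  have hn0 : (0:ℝ) ≤ (n:ℝ) := Nat.cast_nonneg n
  calc (n:ℝ) * a ≤ (n:ℝ) * (2^n * V * t) := mul_le_mul_of_nonneg_left hfin hn0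
    _ = (n:ℝ) * 2^n * V * t := by ring


lemma log_lintegral_bound (hn : 4 ≤ n) :
    ∃ C₀ : ℝ≥0∞, C₀ ≠ ⊤ ∧ ∀ y' : E', ‖y'‖ ≤ 3/2 →
      ∫⁻ u : Metric.sphere (0 : E') 1, ENNReal.ofReal |Real.log ‖(u : E') - y'‖|
          ∂((volume : Measure E').toSphere) ≤ C₀ := by
  set σ := (volume : Measure E').toSphere with hσdef
  set K : ℝ := n * 2 ^ n * (volume (Metric.ball (0 : E') 1)).toReal with hKdef
  have hK0 : 0 ≤ K := by positivity
  refine ⟨σ Set.univ + ENNReal.ofReal (∫ x in Set.Ioi (1:ℝ), K * Real.exp (-x)), 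
    ENNReal.add_ne_top.2 ⟨measure_ne_top _ _, ENNReal.ofReal_ne_top⟩, fun y' hy' => ?_⟩
  have hm : Measurable fun u : Metric.sphere (0:E') 1 => |Real.log ‖(u:E') - y'‖| := by
    have : Measurable fun u : Metric.sphere (0:E') 1 => Real.log ‖(u:E') - y'‖ :=
      Real.measurable_log.comp (continuous_subtype_val.sub continuous_const).norm.measurable
    exact this.abs
  rw [MeasureTheory.lintegral_eq_lintegral_meas_lt σ
    (Filter.Eventually.of_forall fun _ => abs_nonneg _) hm.aemeasurable]
  have hsub : Set.Ioi (0:ℝ) ⊆ Set.Ioc 0 1 ∪ Set.Ioi 1 := by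
    intro x hx
    rcases le_or_gt x 1 with h | h
    exacts [Or.inl ⟨hx, h⟩, Or.inr h]
  have hint : IntegrableOn (fun x : ℝ => K * Real.exp (-x)) (Set.Ioi 1) := by
    simpa [neg_one_mul, IntegrableOn] using ((exp_neg_integrableOn_Ioi 1 one_pos).const_mul K)
  calc ∫⁻ t in Set.Ioi (0:ℝ), σ {u | t < |Real.log ‖(u:E') - y'‖|}
      ≤ ∫⁻ t in (Set.Ioc (0:ℝ) 1 ∪ Set.Ioi 1), σ {u | t < |Real.log ‖(u:E') - y'‖|} :=
        lintegral_mono_set hsub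
    _ ≤ (∫⁻ t in Set.Ioc (0:ℝ) 1, σ {u | t < |Real.log ‖(u:E') - y'‖|})
        + ∫⁻ t in Set.Ioi (1:ℝ), σ {u | t < |Real.log ‖(u:E') - y'‖|} :=
        lintegral_union_le _ _ _
    _ ≤ σ Set.univ + ENNReal.ofReal (∫ x in Set.Ioi (1:ℝ), K * Real.exp (-x)) := by
        refine add_le_add ?_ ?_
        · calc ∫⁻ t in Set.Ioc (0:ℝ) 1, σ {u | t < |Real.log ‖(u:E') - y'‖|}
              ≤ ∫⁻ _t in Set.Ioc (0:ℝ) 1, σ Set.univ :=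
                lintegral_mono fun t => measure_mono (Set.subset_univ _)
            _ = σ Set.univ := by
                rw [setLIntegral_const, Real.volume_Ioc]
                simp
        · have hle : ∀ t ∈ Set.Ioi (1:ℝ),
              σ {u : Metric.sphere (0:E') 1 | t < |Real.log ‖(u:E') - y'‖|}
                ≤ ENNReal.ofReal (K * Real.exp (-t)) := by
            intro t ht
            have ht1 : (1:ℝ) < t := ht
            have hsub2 : {u : Metric.sphere (0:E') 1 | t < |Real.log ‖(u:E') - y'‖|}
                ⊆ {u : Metric.sphere (0:E') 1 | ‖(u:E') - y'‖ < Real.exp (-t)} := by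
              intro u hu
              simp only [Set.mem_setOf_eq] at hu ⊢
              rcases eq_or_lt_of_le (norm_nonneg ((u:E') - y')) with h0 | h0
              · rw [← h0, Real.log_zero, abs_zero] at hu
                linarith
              · have hun : ‖(u : E')‖ = 1 := mem_sphere_zero_iff_norm.1 u.2
                have hdle : ‖(u:E') - y'‖ ≤ 5/2 := by
                  calc ‖(u:E') - y'‖ ≤ ‖(u:E')‖ + ‖y'‖ := norm_sub_le _ _
                    _ ≤ 5/2 := by rw [hun]; linarith
                have hlogd : Real.log ‖(u:E') - y'‖ < 1 := by
                  rw [Real.log_lt_iff_lt_exp h0]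
                  calc ‖(u:E') - y'‖ ≤ 5/2 := hdle
                    _ < Real.exp 1 := by
                        have := Real.exp_one_gt_d9
                        linarith
                have hneg : Real.log ‖(u:E') - y'‖ < -t := by
                  rcases lt_abs.1 hu with h | h
                  · linarith
                  · linarith
                rwa [← Real.log_lt_iff_lt_exp h0]
            calc σ {u : Metric.sphere (0:E') 1 | t < |Real.log ‖(u:E') - y'‖|}
                ≤ σ {u : Metric.sphere (0:E') 1 | ‖(u:E') - y'‖ < Real.exp (-t)} :=
                  measure_mono hsub2
              _ ≤ ENNReal.ofReal (K * Real.exp (-t)) := by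
                  rw [hKdef]
                  exact cap_bound (by omega) y' (Real.exp_pos _)
                    (Real.exp_lt_one_iff.2 (by linarith))
          calc ∫⁻ t in Set.Ioi (1:ℝ), σ {u | t < |Real.log ‖(u:E') - y'‖|}
              ≤ ∫⁻ t in Set.Ioi (1:ℝ), ENNReal.ofReal (K * Real.exp (-t)) :=
                setLIntegral_mono
                  ((measurable_const.mul
                    (Real.measurable_exp.comp measurable_neg)).ennreal_ofReal) hle
            _ = ENNReal.ofReal (∫ x in Set.Ioi (1:ℝ), K * Real.exp (-x)) :=
                (MeasureTheory.ofReal_integral_eq_lintegral_ofReal hint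
                  (Filter.Eventually.of_forall fun x => by positivity)).symm

end SphereAvgAux

theorem sphereAvg_log_est' (n : ℕ) (hn : 4 ≤ n) (hne : Even n) :
    ∃ C : ℝ, 0 < C ∧ ∀ (r s : ℝ) (y : EuclideanSpace ℝ (Fin n)),
      0 < r → 0 < s → r / 2 ≤ s → s ≤ 3 * r / 2 → ‖y‖ = s →
      |(⨍ u : Metric.sphere (0 : EuclideanSpace ℝ (Fin n)) 1,
          (fun x => Real.log (‖y‖ / ‖x - y‖)) ((0:EuclideanSpace ℝ (Fin n)) + r • (u : EuclideanSpace ℝ (Fin n)))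
            ∂((volume : Measure (EuclideanSpace ℝ (Fin n))).toSphere))| ≤ C := by
  obtain ⟨C₀, hC₀top, hC₀⟩ := SphereAvgAux.log_lintegral_bound (n := n) hn
  set σ := (volume : Measure (EuclideanSpace ℝ (Fin n))).toSphere with hσdef
  set B : ℝ≥0∞ := ENNReal.ofReal (Real.log 2) * σ Set.univ + C₀ with hBdef
  have hBfin : B ≠ ⊤ := ENNReal.add_ne_top.2
    ⟨ENNReal.mul_ne_top ENNReal.ofReal_ne_top (measure_ne_top _ _), hC₀top⟩
  refine ⟨(σ Set.univ).toReal⁻¹ * B.toReal + 1, by positivity, ?_⟩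
  intro r s y hr hs h1 h2 hy
  set y' : EuclideanSpace ℝ (Fin n) := r⁻¹ • y with hy'def
  have hrne : r ≠ 0 := ne_of_gt hr
  have hy'norm : ‖y'‖ = s / r := by
    rw [hy'def, norm_smul, norm_inv, Real.norm_eq_abs, abs_of_pos hr, hy]
    ring
  have hsr1 : 1/2 ≤ s / r := by rw [le_div_iff₀ hr]; linarith
  have hsr2 : s / r ≤ 3/2 := by rw [div_le_iff₀ hr]; linarith
  have hsr0 : 0 < s / r := by positivity
  -- pointwise bound
  have hpt : ∀ u : Metric.sphere (0 : EuclideanSpace ℝ (Fin n)) 1,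
      |Real.log (‖y‖ / ‖((0:EuclideanSpace ℝ (Fin n)) + r • (u : EuclideanSpace ℝ (Fin n))) - y‖)|
        ≤ Real.log 2 + |Real.log ‖(u : EuclideanSpace ℝ (Fin n)) - y'‖| := by
    intro u
    have hnorm : ‖((0:EuclideanSpace ℝ (Fin n)) + r • (u : EuclideanSpace ℝ (Fin n))) - y‖
        = r * ‖(u : EuclideanSpace ℝ (Fin n)) - y'‖ := by
      rw [zero_add]
      have hsm : r • (u : EuclideanSpace ℝ (Fin n)) - y
          = r • ((u : EuclideanSpace ℝ (Fin n)) - y') := by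
        rw [smul_sub, hy'def, smul_inv_smul₀ hrne]
      rw [hsm, norm_smul, Real.norm_eq_abs, abs_of_pos hr]
    set d := ‖(u : EuclideanSpace ℝ (Fin n)) - y'‖ with hddef
    have hd0 : 0 ≤ d := norm_nonneg _
    rw [hy, hnorm, ← div_div]
    rcases eq_or_lt_of_le hd0 with h0 | h0
    · rw [← h0, div_zero, Real.log_zero, abs_zero]
      have h2' : (0:ℝ) ≤ Real.log 2 := Real.log_nonneg one_le_two
      linarith [abs_nonneg (Real.log d)]
    · rw [Real.log_div (ne_of_gt hsr0) (ne_of_gt h0)]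
      have hlog2 : |Real.log (s/r)| ≤ Real.log 2 := by
        rw [abs_le]
        constructor
        · have hh : Real.log (2⁻¹ : ℝ) ≤ Real.log (s/r) :=
            Real.log_le_log (by norm_num) (by linarith)
          rwa [Real.log_inv] at hh
        · exact Real.log_le_log hsr0 (by linarith)
      calc |Real.log (s/r) - Real.log d|
          ≤ |Real.log (s/r)| + |Real.log d| := abs_sub _ _
        _ ≤ Real.log 2 + |Real.log d| := by linarith
  -- lintegral bound
  have hlin : ∫⁻ u : Metric.sphere (0 : EuclideanSpace ℝ (Fin n)) 1,
      ENNReal.ofReal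
        ‖Real.log (‖y‖ / ‖((0:EuclideanSpace ℝ (Fin n)) + r • (u : EuclideanSpace ℝ (Fin n))) - y‖)‖
        ∂σ ≤ B := by
    calc ∫⁻ u : Metric.sphere (0 : EuclideanSpace ℝ (Fin n)) 1,
        ENNReal.ofReal
          ‖Real.log (‖y‖ / ‖((0:EuclideanSpace ℝ (Fin n)) + r • (u : EuclideanSpace ℝ (Fin n))) - y‖)‖
          ∂σ
        ≤ ∫⁻ u : Metric.sphere (0 : EuclideanSpace ℝ (Fin n)) 1,
          (ENNReal.ofReal (Real.log 2)
            + ENNReal.ofReal |Real.log ‖(u : EuclideanSpace ℝ (Fin n)) - y'‖|) ∂σ := by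
          refine lintegral_mono fun u => ?_
          rw [← ENNReal.ofReal_add (Real.log_nonneg one_le_two) (abs_nonneg _)]
          exact ENNReal.ofReal_le_ofReal (by simpa [Real.norm_eq_abs] using hpt u)
      _ = ENNReal.ofReal (Real.log 2) * σ Set.univ
          + ∫⁻ u : Metric.sphere (0 : EuclideanSpace ℝ (Fin n)) 1,
            ENNReal.ofReal |Real.log ‖(u : EuclideanSpace ℝ (Fin n)) - y'‖| ∂σ := by
          rw [lintegral_add_left measurable_const, lintegral_const]
      _ ≤ B := by
          rw [hBdef]
          exact add_le_add le_rfl (hC₀ y' (by rw [hy'norm]; linarith))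
  have hnn : (0:ℝ) ≤ (σ Set.univ).toReal⁻¹ := inv_nonneg.2 ENNReal.toReal_nonneg
  calc |(⨍ u : Metric.sphere (0 : EuclideanSpace ℝ (Fin n)) 1,
          (fun x => Real.log (‖y‖ / ‖x - y‖)) ((0:EuclideanSpace ℝ (Fin n)) + r • (u : EuclideanSpace ℝ (Fin n))) ∂σ)|
      = (σ Set.univ).toReal⁻¹ * ‖∫ u : Metric.sphere (0 : EuclideanSpace ℝ (Fin n)) 1,
          Real.log (‖y‖ / ‖((0:EuclideanSpace ℝ (Fin n)) + r • (u : EuclideanSpace ℝ (Fin n))) - y‖) ∂σ‖ := by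
        rw [MeasureTheory.average_eq, measureReal_def, smul_eq_mul, abs_mul, abs_of_nonneg hnn, Real.norm_eq_abs]
    _ ≤ (σ Set.univ).toReal⁻¹ * (∫⁻ u : Metric.sphere (0 : EuclideanSpace ℝ (Fin n)) 1,
          ENNReal.ofReal
            ‖Real.log (‖y‖ / ‖((0:EuclideanSpace ℝ (Fin n)) + r • (u : EuclideanSpace ℝ (Fin n))) - y‖)‖ ∂σ).toReal :=
        mul_le_mul_of_nonneg_left (MeasureTheory.norm_integral_le_lintegral_norm _) hnn
    _ ≤ (σ Set.univ).toReal⁻¹ * B.toReal :=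
        mul_le_mul_of_nonneg_left (ENNReal.toReal_mono hBfin hlin) hnn
    _ ≤ (σ Set.univ).toReal⁻¹ * B.toReal + 1 := by linarith


/-- **Proposition 2.1 iv).** There is a constant `C > 0` such that for all `r, s > 0`
with `r/2 ≤ s ≤ 3r/2` and all `|y| = s`, the spherical average
`L_n(r,s) = ⨍_{∂B_r(0)} log(|y|/|x−y|) dσ(x)` satisfies `|L_n(r,s)| ≤ C`. -/
theorem sphereAvg_log_est (n : ℕ) (hn : 4 ≤ n) (hne : Even n) :
    ∃ C : ℝ, 0 < C ∧ ∀ (r s : ℝ) (y : EuclideanSpace ℝ (Fin n)),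
      0 < r → 0 < s → r / 2 ≤ s → s ≤ 3 * r / 2 → ‖y‖ = s →
      |sphereAvg n (fun x => Real.log (‖y‖ / ‖x - y‖)) 0 r| ≤ C := by
  obtain ⟨C, hC, h⟩ := sphereAvg_log_est' n hn hne
  refine ⟨C, hC, fun r s y hr hs h1 h2 hy => ?_⟩
  simpa [sphereAvg] using h r s y hr hs h1 h2 hy
end
end

section
/- Let n ≥ 4 be an even integer and let F ∈ L¹(ℝⁿ). Define, for x ≠ 0, w₁(x) := ∫_{|y| ≤ |x|/2} log(|x|/|x−y|)·F(y) dy and w₂(x) := ∫_{|y| ≥ 3|x|/2} log(|y|/|x−y|)·F(y) dy. Then w₁(x) → 0 and w₂(x) → 0 as |x| → 0. -/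
open MeasureTheory Metric Real Filter
open scoped Topology ENNReal RealInnerProductSpace

noncomputable section

lemma my_abs_log_le {c r : ℝ} (hc : 1 ≤ c) (h1 : c⁻¹ ≤ r) (h2 : r ≤ c) :
    |Real.log r| ≤ Real.log c := by
  have hc0 : (0:ℝ) < c := lt_of_lt_of_le one_pos hc
  have hr : 0 < r := lt_of_lt_of_le (inv_pos.mpr hc0) h1
  rw [abs_le]
  refine ⟨?_, Real.log_le_log hr h2⟩
  rw [← Real.log_inv]
  exact Real.log_le_log (inv_pos.mpr hc0) h1

/-- **Claim 4.3 (parts of the proof of Proposition 4.2).** For `F ∈ L¹(ℝⁿ)`, the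
functions `w₁(x) = ∫_{|y| ≤ |x|/2} log(|x|/|x−y|) F(y) dy` and
`w₂(x) = ∫_{|y| ≥ 3|x|/2} log(|y|/|x−y|) F(y) dy` tend to `0` as `|x| → 0`. -/
theorem log_kernel_near_and_far_vanish (n : ℕ) (hn : 4 ≤ n) (hne : Even n)
    (F : EuclideanSpace ℝ (Fin n) → ℝ) (hF : Integrable F) :
    Tendsto (fun x : EuclideanSpace ℝ (Fin n) =>
        ∫ y in {y : EuclideanSpace ℝ (Fin n) | ‖y‖ ≤ ‖x‖ / 2},
          Real.log (‖x‖ / ‖x - y‖) * F y)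
      (𝓝[≠] (0 : EuclideanSpace ℝ (Fin n))) (𝓝 0) ∧
    Tendsto (fun x : EuclideanSpace ℝ (Fin n) =>
        ∫ y in {y : EuclideanSpace ℝ (Fin n) | 3 * ‖x‖ / 2 ≤ ‖y‖},
          Real.log (‖y‖ / ‖x - y‖) * F y)
      (𝓝[≠] (0 : EuclideanSpace ℝ (Fin n))) (𝓝 0) := by
  have h0 : ∀ᵐ (y : EuclideanSpace ℝ (Fin n)) ∂volume, y ≠ 0 := by
    haveI : Nonempty (Fin n) := ⟨⟨0, by omega⟩⟩
    haveI : Nontrivial (EuclideanSpace ℝ (Fin n)) := inferInstance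
    rw [ae_iff]
    simp only [not_not]
    simpa using measure_singleton (0 : EuclideanSpace ℝ (Fin n))
  have hbound : Integrable (fun y => Real.log 3 * |F y|) volume := (hF.abs.const_mul _)
  have hxne : ∀ᶠ x in 𝓝[≠] (0 : EuclideanSpace ℝ (Fin n)), x ≠ 0 :=
    eventually_mem_nhdsWithin
  constructor
  · -- w₁
    have hmeas : ∀ x : EuclideanSpace ℝ (Fin n),
        MeasurableSet {y : EuclideanSpace ℝ (Fin n) | ‖y‖ ≤ ‖x‖ / 2} :=
      fun x => measurableSet_le measurable_norm measurable_const
    have heq : (fun x : EuclideanSpace ℝ (Fin n) =>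
        ∫ y in {y : EuclideanSpace ℝ (Fin n) | ‖y‖ ≤ ‖x‖ / 2},
          Real.log (‖x‖ / ‖x - y‖) * F y) = fun x =>
        ∫ y, ({y : EuclideanSpace ℝ (Fin n) | ‖y‖ ≤ ‖x‖ / 2}).indicator
          (fun y => Real.log (‖x‖ / ‖x - y‖) * F y) y := by
      funext x; rw [integral_indicator (hmeas x)]
    rw [heq]
    have key := tendsto_integral_filter_of_dominated_convergence
      (μ := volume) (f := fun _ : EuclideanSpace ℝ (Fin n) => (0:ℝ))
      (F := fun x : EuclideanSpace ℝ (Fin n) =>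
        ({y : EuclideanSpace ℝ (Fin n) | ‖y‖ ≤ ‖x‖ / 2}).indicator
          (fun y => Real.log (‖x‖ / ‖x - y‖) * F y))
      (l := 𝓝[≠] (0 : EuclideanSpace ℝ (Fin n)))
      (fun y => Real.log 3 * |F y|)
      ?_ ?_ hbound ?_
    · simpa using key
    · filter_upwards with x
      exact (((Real.measurable_log.comp
        (measurable_const.div ((measurable_id.const_sub x).norm))).aemeasurable.aestronglyMeasurable).mul
        hF.1).indicator (hmeas x)
    · filter_upwards [hxne] with x hx
      filter_upwards with y
      by_cases hy : y ∈ {y : EuclideanSpace ℝ (Fin n) | ‖y‖ ≤ ‖x‖ / 2}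
      · rw [Set.indicator_of_mem hy]
        have hxpos : (0:ℝ) < ‖x‖ := norm_pos_iff.mpr hx
        have hylx : ‖y‖ ≤ ‖x‖ / 2 := hy
        have hlow : ‖x‖ / 2 ≤ ‖x - y‖ := by
          have := norm_sub_norm_le x y
          linarith
        have hhigh : ‖x - y‖ ≤ 3 * ‖x‖ / 2 := by
          have := norm_sub_le x y
          linarith
        have hpos : (0:ℝ) < ‖x - y‖ := lt_of_lt_of_le (by linarith) hlow
        have hr1 : (3:ℝ)⁻¹ ≤ ‖x‖ / ‖x - y‖ := by
          rw [le_div_iff₀ hpos]; nlinarith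
        have hr2 : ‖x‖ / ‖x - y‖ ≤ 3 := by
          rw [div_le_iff₀ hpos]; nlinarith
        rw [norm_mul, Real.norm_eq_abs, Real.norm_eq_abs]
        exact mul_le_mul_of_nonneg_right (my_abs_log_le (by norm_num) hr1 hr2) (abs_nonneg _)
      · rw [Set.indicator_of_notMem hy]
        simp only [norm_zero]
        positivity
    · filter_upwards [h0] with y hy
      have hy' : (0:ℝ) < ‖y‖ := norm_pos_iff.mpr hy
      have hball : ∀ᶠ x in 𝓝[≠] (0 : EuclideanSpace ℝ (Fin n)), ‖x‖ < 2 * ‖y‖ := by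
        have : Metric.ball (0 : EuclideanSpace ℝ (Fin n)) (2 * ‖y‖) ∈
            𝓝[≠] (0 : EuclideanSpace ℝ (Fin n)) :=
          nhdsWithin_le_nhds (Metric.ball_mem_nhds _ (by positivity))
        filter_upwards [this] with x hx
        simpa [dist_eq_norm] using hx
      refine Tendsto.congr' ?_ tendsto_const_nhds
      filter_upwards [hball] with x hx
      rw [Set.indicator_of_notMem]
      simp only [Set.mem_setOf_eq, not_le]
      linarith
  · -- w₂
    have hmeas : ∀ x : EuclideanSpace ℝ (Fin n),
        MeasurableSet {y : EuclideanSpace ℝ (Fin n) | 3 * ‖x‖ / 2 ≤ ‖y‖} :=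
      fun x => measurableSet_le measurable_const measurable_norm
    have heq : (fun x : EuclideanSpace ℝ (Fin n) =>
        ∫ y in {y : EuclideanSpace ℝ (Fin n) | 3 * ‖x‖ / 2 ≤ ‖y‖},
          Real.log (‖y‖ / ‖x - y‖) * F y) = fun x =>
        ∫ y, ({y : EuclideanSpace ℝ (Fin n) | 3 * ‖x‖ / 2 ≤ ‖y‖}).indicator
          (fun y => Real.log (‖y‖ / ‖x - y‖) * F y) y := by
      funext x; rw [integral_indicator (hmeas x)]
    rw [heq]
    have key := tendsto_integral_filter_of_dominated_convergence
      (μ := volume) (f := fun _ : EuclideanSpace ℝ (Fin n) => (0:ℝ))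
      (F := fun x : EuclideanSpace ℝ (Fin n) =>
        ({y : EuclideanSpace ℝ (Fin n) | 3 * ‖x‖ / 2 ≤ ‖y‖}).indicator
          (fun y => Real.log (‖y‖ / ‖x - y‖) * F y))
      (l := 𝓝[≠] (0 : EuclideanSpace ℝ (Fin n)))
      (fun y => Real.log 3 * |F y|)
      ?_ ?_ hbound ?_
    · simpa using key
    · filter_upwards with x
      exact (((Real.measurable_log.comp
        (measurable_norm.div ((measurable_id.const_sub x).norm))).aemeasurable.aestronglyMeasurable).mul
        hF.1).indicator (hmeas x)
    · filter_upwards [hxne] with x hx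
      filter_upwards with y
      by_cases hy : y ∈ {y : EuclideanSpace ℝ (Fin n) | 3 * ‖x‖ / 2 ≤ ‖y‖}
      · rw [Set.indicator_of_mem hy]
        have hxpos : (0:ℝ) < ‖x‖ := norm_pos_iff.mpr hx
        have hyge : 3 * ‖x‖ / 2 ≤ ‖y‖ := hy
        have hypos : (0:ℝ) < ‖y‖ := lt_of_lt_of_le (by linarith) hyge
        have hlow : ‖y‖ / 3 ≤ ‖x - y‖ := by
          have h1 : ‖y‖ - ‖x‖ ≤ ‖x - y‖ := by
            have := norm_sub_norm_le y x
            rwa [norm_sub_rev y x] at this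
          linarith
        have hhigh : ‖x - y‖ ≤ 5 / 3 * ‖y‖ := by
          have := norm_sub_le x y
          linarith
        have hpos : (0:ℝ) < ‖x - y‖ := lt_of_lt_of_le (by linarith) hlow
        have hr1 : (3:ℝ)⁻¹ ≤ ‖y‖ / ‖x - y‖ := by
          rw [le_div_iff₀ hpos]; nlinarith
        have hr2 : ‖y‖ / ‖x - y‖ ≤ 3 := by
          rw [div_le_iff₀ hpos]; nlinarith
        rw [norm_mul, Real.norm_eq_abs, Real.norm_eq_abs]
        exact mul_le_mul_of_nonneg_right (my_abs_log_le (by norm_num) hr1 hr2) (abs_nonneg _)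
      · rw [Set.indicator_of_notMem hy]
        simp only [norm_zero]
        positivity
    · filter_upwards [h0] with y hy
      have hy' : (0:ℝ) < ‖y‖ := norm_pos_iff.mpr hy
      have hball : ∀ᶠ x in 𝓝[≠] (0 : EuclideanSpace ℝ (Fin n)), ‖x‖ < ‖y‖ / 3 := by
        have : Metric.ball (0 : EuclideanSpace ℝ (Fin n)) (‖y‖ / 3) ∈
            𝓝[≠] (0 : EuclideanSpace ℝ (Fin n)) :=
          nhdsWithin_le_nhds (Metric.ball_mem_nhds _ (by positivity))
        filter_upwards [this] with x hx
        simpa [dist_eq_norm] using hx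
      have hlim : Tendsto (fun x : EuclideanSpace ℝ (Fin n) =>
          Real.log (‖y‖ / ‖x - y‖) * F y) (𝓝[≠] (0 : EuclideanSpace ℝ (Fin n))) (𝓝 0) := by
        have h1 : Tendsto (fun x : EuclideanSpace ℝ (Fin n) => ‖x - y‖)
            (𝓝 (0 : EuclideanSpace ℝ (Fin n))) (𝓝 ‖y‖) := by
          have hc : Continuous fun x : EuclideanSpace ℝ (Fin n) => ‖x - y‖ :=
            (continuous_id.sub continuous_const).norm
          have := hc.tendsto (0 : EuclideanSpace ℝ (Fin n))
          simpa using this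
        have h2 : Tendsto (fun x : EuclideanSpace ℝ (Fin n) => ‖y‖ / ‖x - y‖)
            (𝓝 (0 : EuclideanSpace ℝ (Fin n))) (𝓝 1) := by
          have := (tendsto_const_nhds (x := ‖y‖)).div h1 (ne_of_gt hy')
          simpa [div_self (ne_of_gt hy'), Pi.div_def] using this
        have h3 : Tendsto (fun x : EuclideanSpace ℝ (Fin n) =>
            Real.log (‖y‖ / ‖x - y‖)) (𝓝 (0 : EuclideanSpace ℝ (Fin n))) (𝓝 0) := by
          have := (Real.continuousAt_log (by norm_num : (1:ℝ) ≠ 0)).tendsto.comp h2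
          simpa [Function.comp_def] using this
        have := h3.mul_const (F y)
        rw [zero_mul] at this
        exact this.mono_left nhdsWithin_le_nhds
      refine Tendsto.congr' ?_ hlim
      filter_upwards [hball] with x hx
      rw [Set.indicator_of_mem]
      simp only [Set.mem_setOf_eq]
      linarith
end
end
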